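/- arXiv:2402.12364 — 5 statements merged into one kernel-verified Lean document; each statement's English description precedes it below -/
import Mathlib

section
/- The cut-rank function of a finite simple graph is submodular: for all subsets A, B of the vertex set, cutrk_G(A ∪ B) + cutrk_G(A ∩ B) ≤ cutrk_G(A) + cutrk_G(B). -/
open Classical in
/-- The cut-rank of a vertex set `A` in a finite simple graph `G`: the rank over the
two-element field `GF(2)` of the biadjacency matrix whose rows are indexed by `A`, whose
columns are indexed by the complement `V(G) \ A`, and whose `(u, w)` entry is `1` iff
`uw` is an edge of `G`. -/
noncomputable def SimpleGraph.cutrk {V : Type*} [Finite V] (G : SimpleGraph V)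
    (A : Set V) : ℕ :=
  haveI : Fintype ↥A := Fintype.ofFinite ↥A
  haveI : Fintype ↥(Aᶜ) := Fintype.ofFinite ↥(Aᶜ)
  Matrix.rank (Matrix.of fun (u : ↥A) (w : ↥(Aᶜ)) =>
    if G.Adj u.1 w.1 then (1 : ZMod 2) else 0)

open Submodule Module in
private lemma rank_row_aux {m n R : Type*} [Field R] [Finite m] (inst : Fintype n)
    (M : Matrix m n R) :
    @Matrix.rank m n R inst _ M = finrank R (span R (Set.range M)) := by
  letI := inst
  exact Matrix.rank_eq_finrank_span_row M

set_option synthInstance.maxHeartbeats 1000000 in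
set_option maxHeartbeats 1000000 in
open Classical Submodule Module in
private theorem cutrk_add_ncard_aux {V : Type*} [Fintype V] (G : SimpleGraph V) (A : Set V) :
    G.cutrk A + A.ncard =
      finrank (ZMod 2) (span (ZMod 2)
        (((fun v => fun w => if G.Adj v w then (1 : ZMod 2) else 0) '' A) ∪
         ((fun v => Pi.single v (1 : ZMod 2)) '' A))) := by
  classical
  set r : V → (V → ZMod 2) := fun v w => if G.Adj v w then (1 : ZMod 2) else 0 with hr
  set e : V → (V → ZMod 2) := fun v => Pi.single v (1 : ZMod 2) with he
  set π : (V → ZMod 2) →ₗ[ZMod 2] (↥(Aᶜ) → ZMod 2) :=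
    LinearMap.funLeft (ZMod 2) (ZMod 2) ((↑) : ↥(Aᶜ) → V) with hπ
  set U : Submodule (ZMod 2) (V → ZMod 2) := span (ZMod 2) (r '' A) with hU
  set E : Submodule (ZMod 2) (V → ZMod 2) := span (ZMod 2) (e '' A) with hE
  -- step 1 : cutrk A = finrank (map π U)
  have h1 : G.cutrk A = finrank (ZMod 2) (U.map π) := by
    have hrange : Set.range (Matrix.of fun (u : ↥A) (w : ↥(Aᶜ)) =>
        if G.Adj u.1 w.1 then (1 : ZMod 2) else 0) = (fun v => π (r v)) '' A := by
      rw [Set.image_eq_range]; rfl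
    have hspan : span (ZMod 2) (Set.range (Matrix.of fun (u : ↥A) (w : ↥(Aᶜ)) =>
        if G.Adj u.1 w.1 then (1 : ZMod 2) else 0)) = U.map π := by
      rw [hrange, hU, ← span_image, Set.image_image]
    rw [SimpleGraph.cutrk, rank_row_aux, hspan]
  -- step 2 : ker π = E
  have hker : LinearMap.ker π = E := by
    apply le_antisymm
    · intro f hf
      have hf' : ∀ w : ↥(Aᶜ), f w.1 = 0 := fun w => congrFun (LinearMap.mem_ker.mp hf) w
      have hfsum : f = ∑ v ∈ Finset.univ.filter (· ∈ A), (f v) • e v := by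
        ext w
        by_cases hw : w ∈ A
        · rw [Finset.sum_apply,
            Finset.sum_eq_single_of_mem w (Finset.mem_filter.mpr ⟨Finset.mem_univ _, hw⟩)]
          · simp [he, Pi.single_apply]
          · intro b _ hb
            simp [he, Pi.single_apply, Ne.symm hb]
        · have h0 := hf' ⟨w, hw⟩
          rw [h0, Finset.sum_apply]
          symm
          apply Finset.sum_eq_zero
          intro b hb
          simp only [Finset.mem_filter] at hb
          have hbw : b ≠ w := fun h => hw (h ▸ hb.2)
          simp [he, Pi.single_apply, hbw]
      rw [hfsum]
      exact Submodule.sum_mem _ fun v hv =>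
        Submodule.smul_mem _ _ (subset_span ⟨v, (Finset.mem_filter.mp hv).2, rfl⟩)
    · rw [hE, span_le]
      rintro _ ⟨a, ha, rfl⟩
      simp only [SetLike.mem_coe, LinearMap.mem_ker]
      ext w
      have hwa : (w : V) ≠ a := fun h => w.2 (h ▸ ha)
      simp [he, hπ, LinearMap.funLeft_apply, Pi.single_apply, hwa]
  -- step 3 : finrank E = A.ncard
  have hE_rank : finrank (ZMod 2) E = A.ncard := by
    have hli : LinearIndependent (ZMod 2) (fun a : ↥A => e a.1) := by
      have h2 := (Pi.basisFun (ZMod 2) V).linearIndependent.comp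
        ((↑) : ↥A → V) Subtype.val_injective
      convert h2 using 1
      exact funext fun a => by simp [he]
    have himg : e '' A = Set.range (fun a : ↥A => e a.1) := Set.image_eq_range e A
    rw [hE, himg, finrank_span_eq_card hli, ← Nat.card_coe_set_eq,
      Nat.card_eq_fintype_card]
  -- step 4 : rank-nullity for domRestrict
  have h4 : finrank (ZMod 2) (U.map π)
      + finrank (ZMod 2) (U ⊓ E : Submodule (ZMod 2) (V → ZMod 2))
      = finrank (ZMod 2) U := by
    have hrn := LinearMap.finrank_range_add_finrank_ker (π.domRestrict U)
    rw [LinearMap.range_domRestrict] at hrn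
    rw [← hrn]
    congr 1
    rw [LinearMap.ker_domRestrict, hker]
    have hcomap : Submodule.comap U.subtype E = Submodule.comap U.subtype (U ⊓ E) := by
      ext x; simp [x.2]
    rw [hcomap]
    exact (Submodule.comapSubtypeEquivOfLe
      (inf_le_left : U ⊓ E ≤ U)).finrank_eq.symm
  -- step 5 : combine
  have h5 : finrank (ZMod 2) (U ⊔ E : Submodule (ZMod 2) (V → ZMod 2))
      + finrank (ZMod 2) (U ⊓ E : Submodule (ZMod 2) (V → ZMod 2))
      = finrank (ZMod 2) U + finrank (ZMod 2) E :=
    Submodule.finrank_sup_add_finrank_inf_eq U E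
  have hspanU : span (ZMod 2) ((r '' A) ∪ (e '' A)) = U ⊔ E := span_union _ _
  rw [hspanU, h1, ← hE_rank]
  omega

open Classical Submodule Module in
/-- **Submodularity of the cut-rank function**:
`cutrk_G(A ∪ B) + cutrk_G(A ∩ B) ≤ cutrk_G(A) + cutrk_G(B)`. -/
theorem SimpleGraph.cutrk_submodular {V : Type*} [Fintype V] (G : SimpleGraph V)
    (A B : Set V) :
    G.cutrk (A ∪ B) + G.cutrk (A ∩ B) ≤ G.cutrk A + G.cutrk B := by
  classical
  set r : V → (V → ZMod 2) := fun v w => if G.Adj v w then (1 : ZMod 2) else 0 with hr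
  set e : V → (V → ZMod 2) := fun v => Pi.single v (1 : ZMod 2) with he
  set T : Set V → Set (V → ZMod 2) := fun C => (r '' C) ∪ (e '' C) with hT
  have key : ∀ C : Set V, G.cutrk C + C.ncard = finrank (ZMod 2) (span (ZMod 2) (T C)) :=
    fun C => cutrk_add_ncard_aux G C
  have hsup : span (ZMod 2) (T (A ∪ B)) = span (ZMod 2) (T A) ⊔ span (ZMod 2) (T B) := by
    rw [← span_union]
    congr 1
    simp only [hT, Set.image_union]
    ext x
    simp only [Set.mem_union]
    tauto
  have hinf : span (ZMod 2) (T (A ∩ B)) ≤ span (ZMod 2) (T A) ⊓ span (ZMod 2) (T B) := by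
    refine le_inf (span_mono ?_) (span_mono ?_) <;>
      simp only [hT] <;>
      exact Set.union_subset_union (Set.image_mono (by simp)) (Set.image_mono (by simp))
  have hg : finrank (ZMod 2) (span (ZMod 2) (T (A ∪ B)))
      + finrank (ZMod 2) (span (ZMod 2) (T (A ∩ B)))
      ≤ finrank (ZMod 2) (span (ZMod 2) (T A)) + finrank (ZMod 2) (span (ZMod 2) (T B)) := by
    calc finrank (ZMod 2) (span (ZMod 2) (T (A ∪ B)))
        + finrank (ZMod 2) (span (ZMod 2) (T (A ∩ B)))
        ≤ finrank (ZMod 2) ↥(span (ZMod 2) (T A) ⊔ span (ZMod 2) (T B))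
          + finrank (ZMod 2) ↥(span (ZMod 2) (T A) ⊓ span (ZMod 2) (T B)) := by
          rw [hsup]
          exact Nat.add_le_add_left (Submodule.finrank_mono hinf) _
      _ = _ := Submodule.finrank_sup_add_finrank_inf_eq _ _
  have hcard : (A ∪ B).ncard + (A ∩ B).ncard = A.ncard + B.ncard :=
    Set.ncard_union_add_ncard_inter A B (Set.toFinite A) (Set.toFinite B)
  have k1 := key (A ∪ B)
  have k2 := key (A ∩ B)
  have k3 := key A
  have k4 := key B
  omega
end

section
/- For any four linear subspaces U₁, U₂, V₁, V₂ of a finite-dimensional vector space over a field, the following dimension identity holds: dim((U₁ + U₂) ∩ (V₁ + V₂)) + dim(U₁ ∩ U₂) + dim(V₁ ∩ V₂) = dim((U₁ + V₁) ∩ (U₂ + V₂)) + dim(U₁ ∩ V₁) + dim(U₂ ∩ V₂). -/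
/-!
Both sides equal `dim U₁ + dim U₂ + dim V₁ + dim V₂ - dim (U₁ + U₂ + V₁ + V₂)`: apply
Grassmann's formula `dim (X + Y) + dim (X ∩ Y) = dim X + dim Y` once to the outer intersection
and once to each of the two inner ones.
-/

namespace Submodule

section Rank

universe u

variable {R : Type*} {M : Type u} [Ring R] [HasRankNullity.{u} R] [AddCommGroup M] [Module R M]

theorem rank_sup_inf_sup_add_rank_sup_sup (A B C D : Submodule R M) :
    Module.rank R ↥((A ⊔ B) ⊓ (C ⊔ D)) + Module.rank R ↥(A ⊓ B) + Module.rank R ↥(C ⊓ D) +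
        Module.rank R ↥(A ⊔ B ⊔ (C ⊔ D)) =
      Module.rank R A + Module.rank R B + Module.rank R C + Module.rank R D := by
  calc _ = (Module.rank R ↥(A ⊔ B ⊔ (C ⊔ D)) + Module.rank R ↥((A ⊔ B) ⊓ (C ⊔ D))) +
          Module.rank R ↥(A ⊓ B) + Module.rank R ↥(C ⊓ D) := by ac_rfl
    _ = (Module.rank R ↥(A ⊔ B) + Module.rank R ↥(A ⊓ B)) +
          (Module.rank R ↥(C ⊔ D) + Module.rank R ↥(C ⊓ D)) := by
        rw [rank_sup_add_rank_inf_eq]; ac_rfl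
    _ = _ := by rw [rank_sup_add_rank_inf_eq, rank_sup_add_rank_inf_eq, ← add_assoc]

end Rank

theorem finrank_sup_inf_sup_add_finrank_sup_sup {K V : Type*} [DivisionRing K] [AddCommGroup V]
    [Module K V] [FiniteDimensional K V] (A B C D : Submodule K V) :
    Module.finrank K ↥((A ⊔ B) ⊓ (C ⊔ D)) + Module.finrank K ↥(A ⊓ B) +
        Module.finrank K ↥(C ⊓ D) + Module.finrank K ↥(A ⊔ B ⊔ (C ⊔ D)) =
      Module.finrank K A + Module.finrank K B + Module.finrank K C + Module.finrank K D := by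
  have h := rank_sup_inf_sup_add_rank_sup_sup A B C D
  simp only [← Module.finrank_eq_rank] at h
  exact_mod_cast h

end Submodule

/-- The dimension identity of Jeong–Kim–Oum (2017, Lemma 25) for four subspaces of a
finite-dimensional vector space. -/
theorem dim_switching_identity {F W : Type*} [Field F] [AddCommGroup W] [Module F W]
    [FiniteDimensional F W] (U₁ U₂ V₁ V₂ : Submodule F W) :
    Module.finrank F ↥((U₁ ⊔ U₂) ⊓ (V₁ ⊔ V₂)) + Module.finrank F ↥(U₁ ⊓ U₂) +
        Module.finrank F ↥(V₁ ⊓ V₂) =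
      Module.finrank F ↥((U₁ ⊔ V₁) ⊓ (U₂ ⊔ V₂)) + Module.finrank F ↥(U₁ ⊓ V₁) +
        Module.finrank F ↥(U₂ ⊓ V₂) := by
  have h₁ := Submodule.finrank_sup_inf_sup_add_finrank_sup_sup U₁ U₂ V₁ V₂
  have h₂ := Submodule.finrank_sup_inf_sup_add_finrank_sup_sup U₁ V₁ U₂ V₂
  rw [sup_sup_sup_comm] at h₁
  omega
end

section
/- Let G be a finite simple graph with vertex set {1, …, n}, and for each vertex v let A_v be the subspace of GF(2)^n spanned by the standard basis vector e_v and the vector e_{N(v)} := Σ_{u ∈ N(v)} e_u. For a set S ⊆ V(G), let A_S := Σ_{v ∈ S} A_v. Then dim(A_S ∩ A_{V(G)∖S}) = 2 · cutrk_G(S). -/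
open Classical in
/-- The canonical subspace `A_v` of a vertex `v`: the subspace of `GF(2)^n` spanned by the
standard basis vector `e_v` and the indicator vector `e_{N(v)} = Σ_{u ∈ N(v)} e_u` of the
neighbourhood of `v`. -/
noncomputable def canonicalSubspace {n : ℕ} (G : SimpleGraph (Fin n)) (v : Fin n) :
    Submodule (ZMod 2) (Fin n → ZMod 2) :=
  Submodule.span (ZMod 2)
    ({Pi.single v 1, fun u => if u ∈ G.neighborSet v then (1 : ZMod 2) else 0} :
      Set (Fin n → ZMod 2))

namespace CutrkAux

open Submodule Classical

/-- Rank is invariant under reindexing a (rectangular) matrix by equivalences. -/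
lemma rank_submatrix' {m m' p p' R : Type*} [Fintype p] [Fintype p'] [Field R]
    (A : Matrix m p R) (e₁ : m' ≃ m) (e₂ : p' ≃ p) :
    (A.submatrix e₁ e₂).rank = A.rank := by
  let ℓ := LinearEquiv.funCongrLeft R R e₁
  rw [Matrix.rank_eq_finrank_span_cols, Matrix.rank_eq_finrank_span_cols]
  have h : Set.range (A.submatrix ⇑e₁ ⇑e₂).transpose
      = ⇑(ℓ : (m → R) →ₗ[R] (m' → R)) '' Set.range A.transpose := by
    ext x
    constructor
    · rintro ⟨j, rfl⟩
      exact ⟨A.transpose (e₂ j), ⟨e₂ j, rfl⟩, rfl⟩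
    · rintro ⟨y, ⟨j, rfl⟩, rfl⟩
      refine ⟨e₂.symm j, ?_⟩
      funext i
      simp [ℓ, Matrix.submatrix, Matrix.transpose, LinearEquiv.funCongrLeft_apply]
  rw [show (A.submatrix e₁ e₂).col = (A.submatrix e₁ e₂).transpose from rfl,
    show A.col = A.transpose from rfl, h, ← Submodule.map_span]
  exact LinearEquiv.finrank_map_eq ℓ _

variable {n : ℕ}

/-- The submodule of vectors supported inside `T`. -/
def suppSub (T : Set (Fin n)) : Submodule (ZMod 2) (Fin n → ZMod 2) where
  carrier := {x | ∀ u ∉ T, x u = 0}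
  add_mem' := fun ha hb u hu => by simp [ha u hu, hb u hu]
  zero_mem' := fun u hu => rfl
  smul_mem' := fun c x hx u hu => by simp [hx u hu]

lemma mem_suppSub {T : Set (Fin n)} {x : Fin n → ZMod 2} :
    x ∈ suppSub T ↔ ∀ u ∉ T, x u = 0 := Iff.rfl

lemma single_mem_suppSub {T : Set (Fin n)} {v : Fin n} (hv : v ∈ T) :
    Pi.single v (1 : ZMod 2) ∈ suppSub T := by
  intro u hu
  have hne : u ≠ v := fun h => hu (by rw [h]; exact hv)
  exact Pi.single_eq_of_ne hne 1

lemma suppSub_eq_span (T : Set (Fin n)) :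
    suppSub T = span (ZMod 2) (Set.range fun v : ↥T => Pi.single v.1 (1 : ZMod 2)) := by
  apply le_antisymm
  · intro x hx
    have hxsum : x = ∑ v : Fin n, Pi.single v (x v) := (Finset.univ_sum_single x).symm
    rw [hxsum]
    apply sum_mem
    intro v _
    by_cases hv : v ∈ T
    · have h1 : Pi.single v (x v) = x v • (Pi.single v (1 : ZMod 2) : Fin n → ZMod 2) := by
        funext u
        by_cases h : u = v
        · subst h; simp
        · simp [h]
      rw [h1]
      exact smul_mem _ _ (subset_span ⟨⟨v, hv⟩, rfl⟩)
    · have hx0 : x v = 0 := hx v hv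
      simp [hx0]
  · rw [span_le]
    rintro _ ⟨v, rfl⟩
    exact single_mem_suppSub v.2

lemma finrank_suppSub (T : Set (Fin n)) :
    Module.finrank (ZMod 2) ↥(suppSub T) = T.ncard := by
  haveI : Fintype ↥T := Fintype.ofFinite ↥T
  rw [suppSub_eq_span]
  have li : LinearIndependent (ZMod 2)
      (fun v : ↥T => (Pi.single v.1 (1 : ZMod 2) : Fin n → ZMod 2)) := by
    have h := (Pi.basisFun (ZMod 2) (Fin n)).linearIndependent.comp
      (fun v : ↥T => v.1) Subtype.val_injective
    have hfun : (⇑(Pi.basisFun (ZMod 2) (Fin n)) ∘ fun v : ↥T => v.1)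
        = fun v : ↥T => (Pi.single v.1 (1 : ZMod 2) : Fin n → ZMod 2) := by
      funext v
      simp [Pi.basisFun_apply]
    rwa [hfun] at h
  rw [finrank_span_eq_card li, ← Nat.card_coe_set_eq, Nat.card_eq_fintype_card]

open Classical in
/-- The row of the biadjacency matrix of `v ∈ T`, viewed inside `GF(2)^n` (supported on `Tᶜ`). -/
noncomputable def rowVec (G : SimpleGraph (Fin n)) (T : Set (Fin n)) (v : ↥T) :
    Fin n → ZMod 2 :=
  fun u => if u ∈ Tᶜ then (if G.Adj v.1 u then 1 else 0) else 0

open Classical in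
noncomputable def sVec (G : SimpleGraph (Fin n)) (T : Set (Fin n)) (v : Fin n) :
    Fin n → ZMod 2 :=
  fun u => if u ∈ T then (if G.Adj v u then 1 else 0) else 0

lemma sVec_mem_suppSub (G : SimpleGraph (Fin n)) (T : Set (Fin n)) (v : Fin n) :
    sVec G T v ∈ suppSub T := by
  intro u hu
  simp [sVec, hu]

lemma rowVec_mem_suppSub_compl (G : SimpleGraph (Fin n)) (T : Set (Fin n)) (v : ↥T) :
    rowVec G T v ∈ suppSub Tᶜ := by
  intro u hu
  simp [rowVec, hu]

lemma nbhd_split (G : SimpleGraph (Fin n)) (T : Set (Fin n)) (v : ↥T) :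
    (fun u => if u ∈ G.neighborSet v.1 then (1 : ZMod 2) else 0)
      = sVec G T v.1 + rowVec G T v := by
  funext u
  by_cases h : u ∈ T <;>
    simp [sVec, rowVec, h, SimpleGraph.mem_neighborSet]

lemma suppSub_le_biSup (G : SimpleGraph (Fin n)) (T : Set (Fin n)) :
    suppSub T ≤ ⨆ v ∈ T, canonicalSubspace G v := by
  rw [suppSub_eq_span, span_le]
  rintro _ ⟨v, rfl⟩
  have h1 : Pi.single v.1 (1 : ZMod 2) ∈ canonicalSubspace G v.1 :=
    subset_span (Set.mem_insert _ _)
  exact le_iSup₂ (f := fun v _ => canonicalSubspace G v) v.1 v.2 h1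

lemma biSup_eq (G : SimpleGraph (Fin n)) (T : Set (Fin n)) :
    (⨆ v ∈ T, canonicalSubspace G v)
      = suppSub T ⊔ span (ZMod 2) (Set.range (rowVec G T)) := by
  apply le_antisymm
  · refine iSup₂_le fun v hv => ?_
    rw [canonicalSubspace, span_le]
    rintro x hx
    rcases hx with rfl | hx
    · exact le_sup_left (α := Submodule (ZMod 2) (Fin n → ZMod 2)) <|
        single_mem_suppSub hv
    · rcases hx with rfl
      rw [nbhd_split G T ⟨v, hv⟩]
      exact add_mem (le_sup_left (α := Submodule (ZMod 2) (Fin n → ZMod 2))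
          (sVec_mem_suppSub G T v))
        (le_sup_right (α := Submodule (ZMod 2) (Fin n → ZMod 2))
          (subset_span ⟨⟨v, hv⟩, rfl⟩))
  · apply sup_le
    · exact suppSub_le_biSup G T
    · rw [span_le]
      rintro _ ⟨v, rfl⟩
      have h1 : (fun u => if u ∈ G.neighborSet v.1 then (1 : ZMod 2) else 0)
          ∈ ⨆ w ∈ T, canonicalSubspace G w := by
        refine le_iSup₂ (f := fun w _ => canonicalSubspace G w) v.1 v.2 ?_
        exact subset_span (Set.mem_insert_of_mem _ rfl)
      have h2 : sVec G T v.1 ∈ ⨆ w ∈ T, canonicalSubspace G w :=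
        suppSub_le_biSup G T (sVec_mem_suppSub G T v.1)
      have h3 : rowVec G T v
          = (fun u => if u ∈ G.neighborSet v.1 then (1 : ZMod 2) else 0) - sVec G T v.1 := by
        rw [nbhd_split G T v]
        abel
      rw [h3]
      exact sub_mem h1 h2

lemma inf_rows_eq_bot (G : SimpleGraph (Fin n)) (T : Set (Fin n)) :
    suppSub T ⊓ span (ZMod 2) (Set.range (rowVec G T)) = ⊥ := by
  rw [eq_bot_iff]
  rintro x ⟨h1, h2⟩
  have h2' : x ∈ suppSub Tᶜ := by
    have : span (ZMod 2) (Set.range (rowVec G T)) ≤ suppSub Tᶜ := by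
      rw [span_le]; rintro _ ⟨v, rfl⟩; exact rowVec_mem_suppSub_compl G T v
    exact this h2
  have : x = 0 := by
    funext u
    by_cases h : u ∈ T
    · exact h2' u (by simpa using h)
    · exact h1 u h
  simp [this]

open Classical in
/-- Extension by zero from `Tᶜ`-indexed vectors to `GF(2)^n`. -/
noncomputable def extZero (T : Set (Fin n)) :
    (↥(Tᶜ) → ZMod 2) →ₗ[ZMod 2] (Fin n → ZMod 2) where
  toFun y := fun u => if h : u ∈ Tᶜ then y ⟨u, h⟩ else 0
  map_add' y z := by
    funext u
    by_cases h : u ∈ Tᶜ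
    · simp only [dif_pos h, Pi.add_apply]
    · simp only [dif_neg h, Pi.add_apply, add_zero]
  map_smul' c y := by
    funext u
    by_cases h : u ∈ Tᶜ
    · simp only [dif_pos h, Pi.smul_apply, RingHom.id_apply]
    · simp only [dif_neg h, Pi.smul_apply, RingHom.id_apply, smul_zero]

lemma extZero_injective (T : Set (Fin n)) : Function.Injective (extZero T) := by
  intro y z h
  funext w
  have h2 := congrFun h w.1
  simp only [extZero, LinearMap.coe_mk, AddHom.coe_mk, dif_pos w.2] at h2
  simpa using h2

open Classical in
lemma cutrk_eq (G : SimpleGraph (Fin n)) (T : Set (Fin n)) [iTc : Fintype ↥(Tᶜ)] :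
    G.cutrk T = Matrix.rank (Matrix.of fun (u : ↥T) (w : ↥(Tᶜ)) =>
      if G.Adj u.1 w.1 then (1 : ZMod 2) else 0) := by
  unfold SimpleGraph.cutrk
  congr!

open Classical in
lemma finrank_rows (G : SimpleGraph (Fin n)) (T : Set (Fin n)) :
    Module.finrank (ZMod 2) ↥(span (ZMod 2) (Set.range (rowVec G T))) = G.cutrk T := by
  haveI : Fintype ↥T := Fintype.ofFinite ↥T
  haveI : Fintype ↥(Tᶜ) := Fintype.ofFinite ↥(Tᶜ)
  rw [cutrk_eq]
  set M : Matrix ↥T ↥(Tᶜ) (ZMod 2) :=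
    Matrix.of fun (u : ↥T) (w : ↥(Tᶜ)) => if G.Adj u.1 w.1 then (1 : ZMod 2) else 0 with hM
  rw [← Matrix.rank_transpose M, Matrix.rank_eq_finrank_span_cols,
    show M.transpose.col = (fun v : ↥T => M v) from rfl]
  have himg : ⇑(extZero T) ∘ (fun v : ↥T => M v) = rowVec G T := by
    funext v u
    simp only [extZero, LinearMap.coe_mk, AddHom.coe_mk, Function.comp_apply, rowVec]
    by_cases h : u ∈ Tᶜ
    · rw [dif_pos h, if_pos h]
      rfl
    · rw [dif_neg h, if_neg h]
  have : Set.range (rowVec G T) = ⇑(extZero T) '' Set.range (fun v : ↥T => M v) := by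
    rw [← himg, Set.range_comp]
  rw [this, ← Submodule.map_span]
  exact ((Submodule.equivMapOfInjective (extZero T) (extZero_injective T) _).finrank_eq).symm

lemma finrank_biSup (G : SimpleGraph (Fin n)) (T : Set (Fin n)) :
    Module.finrank (ZMod 2) ↥(⨆ v ∈ T, canonicalSubspace G v) = T.ncard + G.cutrk T := by
  rw [biSup_eq]
  have h := Submodule.finrank_sup_add_finrank_inf_eq (suppSub T)
    (span (ZMod 2) (Set.range (rowVec G T)))
  rw [inf_rows_eq_bot, finrank_bot, finrank_suppSub, finrank_rows] at h
  omega

lemma cutrk_compl (G : SimpleGraph (Fin n)) (S : Set (Fin n)) :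
    G.cutrk Sᶜ = G.cutrk S := by
  haveI : Fintype ↥S := Fintype.ofFinite ↥S
  haveI : Fintype ↥(Sᶜ) := Fintype.ofFinite ↥(Sᶜ)
  haveI : Fintype ↥(Sᶜᶜ) := Fintype.ofFinite ↥(Sᶜᶜ)
  rw [cutrk_eq, cutrk_eq]
  rw [← Matrix.rank_transpose
    (Matrix.of fun (u : ↥S) (w : ↥(Sᶜ)) => if G.Adj u.1 w.1 then (1 : ZMod 2) else 0)]
  have h : (Matrix.of fun (u : ↥(Sᶜ)) (w : ↥(Sᶜᶜ)) => if G.Adj u.1 w.1 then (1 : ZMod 2) else 0)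
      = ((Matrix.of fun (u : ↥S) (w : ↥(Sᶜ)) =>
            if G.Adj u.1 w.1 then (1 : ZMod 2) else 0).transpose).submatrix
          (Equiv.refl ↥(Sᶜ)) (Equiv.setCongr (compl_compl S)) := by
    ext u w
    simp [Matrix.submatrix, Matrix.transpose, G.adj_comm]
  rw [h, rank_submatrix']

lemma sup_eq_top (G : SimpleGraph (Fin n)) (S : Set (Fin n)) :
    (⨆ v ∈ S, canonicalSubspace G v) ⊔ (⨆ v ∈ Sᶜ, canonicalSubspace G v) = ⊤ := by
  rw [eq_top_iff]
  intro x _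
  have hx : x = (fun u => if u ∈ S then x u else 0) + (fun u => if u ∈ S then 0 else x u) := by
    funext u; by_cases h : u ∈ S <;> simp [h]
  rw [hx]
  refine add_mem ?_ ?_
  · refine le_sup_left (α := Submodule (ZMod 2) (Fin n → ZMod 2)) <|
      suppSub_le_biSup G S fun u hu => by simp [hu]
  · refine le_sup_right (α := Submodule (ZMod 2) (Fin n → ZMod 2)) <|
      suppSub_le_biSup G Sᶜ fun u hu => by simp at hu; simp [hu]

end CutrkAux

/-- For the canonical subspace arrangement of a graph, with `A_S = Σ_{v ∈ S} A_v`,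
one has `dim (A_S ∩ A_{V(G) ∖ S}) = 2 · cutrk_G(S)` (Jeong–Kim–Oum 2017, Lemma 52). -/
theorem finrank_inf_canonicalSubspace_eq_two_mul_cutrk {n : ℕ} (G : SimpleGraph (Fin n))
    (S : Set (Fin n)) :
    Module.finrank (ZMod 2)
        ↥((⨆ v ∈ S, canonicalSubspace G v) ⊓ (⨆ v ∈ Sᶜ, canonicalSubspace G v)) =
      2 * G.cutrk S := by
  have h := Submodule.finrank_sup_add_finrank_inf_eq
    (⨆ v ∈ S, canonicalSubspace G v) (⨆ v ∈ Sᶜ, canonicalSubspace G v)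
  rw [CutrkAux.sup_eq_top, finrank_top, CutrkAux.finrank_biSup, CutrkAux.finrank_biSup,
    CutrkAux.cutrk_compl] at h
  have hn : S.ncard + Sᶜ.ncard = n := by
    have := Set.ncard_add_ncard_compl S
    simpa using this
  have htot : Module.finrank (ZMod 2) (Fin n → ZMod 2) = n := by
    simp [Module.finrank_pi]
  rw [htot] at h
  omega
end

section
/- Let Σ = {0, −, +} and let w ∈ Σ* be a bichromatic word (each letter colored red or blue). Define sum(u) as (#occurrences of +) − (#occurrences of −) in u, pmax(w) as the maximum of sum over prefixes of w, and pmin(u) as the minimum of sum over prefixes of u. Suppose a, b ≥ 0 are integers with pmax(w) ≤ a, and for each color, the word u obtained by restricting w to the letters of that color satisfies pmin(u) ≥ −b. Then there exists a block shuffle w′ of w (a permutation of the maximal monochromatic blocks of w that preserves the relative order of letters within each color) such that pmax(w′) ≤ pmax(w) and w′ has at most a + 4b + 2 maximal monochromatic blocks. -/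
namespace BichromaticWord

/-- The alphabet `Σ = {0, −, +}`. -/
inductive GSym : Type
  | zero : GSym
  | minus : GSym
  | plus : GSym

/-- A bichromatic word: a list of letters of `Σ`, each coloured with one of two colours. -/
abbrev BWord := List (GSym × Bool)

/-- The value of a symbol: `+` counts `1`, `−` counts `-1`, `0` counts `0`. -/
def GSym.val : GSym → ℤ
  | .zero => 0
  | .minus => -1
  | .plus => 1

/-- The sum of a (bichromatic) word: number of `+` minus number of `−`. -/
def wsum (u : BWord) : ℤ := (u.map fun p => p.1.val).sum

/-- The prefix maximum: the maximum sum of a prefix (the empty prefix has sum `0`). -/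
def pmax (w : BWord) : ℤ := (w.inits.map wsum).foldr max 0

/-- The prefix minimum: the minimum sum of a prefix (the empty prefix has sum `0`). -/
def pmin (w : BWord) : ℤ := (w.inits.map wsum).foldr min 0

/-- The restriction of a bichromatic word to the letters of colour `c`. -/
def restrictColor (w : BWord) (c : Bool) : BWord := w.filter fun p => p.2 == c

/-- Auxiliary step for computing the maximal monochromatic blocks. -/
def addToBlocks (p : GSym × Bool) : List BWord → List BWord
  | [] => [[p]]
  | b :: bs => if b.head?.map Prod.snd = some p.2 then (p :: b) :: bs else [p] :: b :: bs

/-- The list of maximal monochromatic blocks of a bichromatic word, in order. -/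
def blocks (w : BWord) : List BWord := w.foldr addToBlocks []

/-- `w'` is a block shuffle of `w`: it is obtained by permuting the maximal monochromatic
blocks of `w` in a way that preserves the relative order of the letters of each colour. -/
def IsBlockShuffle (w w' : BWord) : Prop :=
  ∃ σ : List BWord, σ.Perm (blocks w) ∧ w' = σ.flatten ∧
    ∀ c : Bool, restrictColor w' c = restrictColor w c

/-! ### Auxiliary definitions -/

/-- The colour of the first letter of a word (defaulting to `true`). -/
def cOf (x : BWord) : Bool := (x.head?.map Prod.snd).getD true

/-- A word is "good" if it is nonempty and monochromatic. -/
def Good (x : BWord) : Prop := x ≠ [] ∧ ∀ p ∈ x, p.2 = cOf x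

@[simp] lemma cOf_cons (p : GSym × Bool) (l : BWord) : cOf (p :: l) = p.2 := rfl

lemma cOf_append_left (x y : BWord) (hx : x ≠ []) : cOf (x ++ y) = cOf x := by
  cases x with
  | nil => exact absurd rfl hx
  | cons p l => rfl

/-! ### Basic lemmas about `wsum`, `pmax`, `pmin` -/

lemma wsum_append (x y : BWord) : wsum (x ++ y) = wsum x + wsum y := by
  simp [wsum]

lemma wsum_flatten (L : List BWord) : wsum L.flatten = (L.map wsum).sum := by
  induction L with
  | nil => simp [wsum]
  | cons x L ih => simp [wsum_append, ih]

lemma foldr_max_nonneg (L : List ℤ) : 0 ≤ L.foldr max 0 := by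
  induction L with
  | nil => simp
  | cons x L ih => exact le_trans ih (le_max_right _ _)

lemma le_foldr_max (L : List ℤ) (x : ℤ) (hx : x ∈ L) : x ≤ L.foldr max 0 := by
  induction L with
  | nil => simp at hx
  | cons y L ih =>
    rcases List.mem_cons.1 hx with h | h
    · subst h; exact le_max_left _ _
    · exact le_trans (ih h) (le_max_right _ _)

lemma foldr_max_le (L : List ℤ) (P : ℤ) (h0 : 0 ≤ P) (h : ∀ x ∈ L, x ≤ P) :
    L.foldr max 0 ≤ P := by
  induction L with
  | nil => simpa
  | cons y L ih =>
    simp only [List.foldr_cons]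
    exact max_le (h y (by simp)) (ih fun x hx => h x (List.mem_cons_of_mem _ hx))

lemma foldr_min_le (L : List ℤ) (x : ℤ) (hx : x ∈ L) : L.foldr min 0 ≤ x := by
  induction L with
  | nil => simp at hx
  | cons y L ih =>
    rcases List.mem_cons.1 hx with h | h
    · subst h; exact min_le_left _ _
    · exact le_trans (min_le_right _ _) (ih h)

lemma pmax_nonneg (w : BWord) : 0 ≤ pmax w := foldr_max_nonneg _

lemma le_pmax_of_prefix {u x : BWord} (h : u <+: x) : wsum u ≤ pmax x := by
  apply le_foldr_max
  exact List.mem_map_of_mem (f := wsum) ((List.mem_inits _ _).2 h)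

lemma wsum_le_pmax (x : BWord) : wsum x ≤ pmax x := le_pmax_of_prefix (List.prefix_refl x)

lemma pmin_le_of_prefix {u x : BWord} (h : u <+: x) : pmin x ≤ wsum u := by
  apply foldr_min_le
  exact List.mem_map_of_mem (f := wsum) ((List.mem_inits _ _).2 h)

lemma pmax_le (x : BWord) (P : ℤ) (h0 : 0 ≤ P) (h : ∀ u, u <+: x → wsum u ≤ P) :
    pmax x ≤ P := by
  apply foldr_max_le _ _ h0
  intro s hs
  rcases List.mem_map.1 hs with ⟨u, hu, rfl⟩
  exact h u ((List.mem_inits _ _).1 hu)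

lemma prefix_append_cases {u x y : BWord} (h : u <+: x ++ y) :
    u <+: x ∨ ∃ v, v <+: y ∧ u = x ++ v := by
  rcases h with ⟨t, ht⟩
  rcases List.append_eq_append_iff.1 ht with ⟨a', ha', _⟩ | ⟨c', hc', hd'⟩
  · left; exact ⟨a', ha'.symm⟩
  · right; exact ⟨c', ⟨t, hd'.symm⟩, hc'⟩

/-- The key swap lemma: moving a nonpositive-sum piece in front of a
nonnegative-sum piece does not increase the prefix maximum. -/
lemma pmax_swap (A u v B : BWord) (hu : 0 ≤ wsum u) (hv : wsum v ≤ 0) :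
    pmax (A ++ (v ++ (u ++ B))) ≤ pmax (A ++ (u ++ (v ++ B))) := by
  apply pmax_le _ _ (pmax_nonneg _)
  intro z hz
  rcases prefix_append_cases hz with hz | ⟨z₁, hz₁, rfl⟩
  · exact le_pmax_of_prefix (hz.trans (List.prefix_append _ _))
  rcases prefix_append_cases hz₁ with hz1 | ⟨z₂, hz₂, rfl⟩
  · -- prefix of v
    have h1 : A ++ (u ++ z₁) <+: A ++ (u ++ (v ++ B)) :=
      (List.prefix_append_right_inj A).2 ((List.prefix_append_right_inj u).2 (hz1.trans (List.prefix_append _ _)))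
    calc wsum (A ++ z₁) ≤ wsum (A ++ (u ++ z₁)) := by
          simp only [wsum_append]; linarith
      _ ≤ _ := le_pmax_of_prefix h1
  rcases prefix_append_cases hz₂ with hz2 | ⟨z₃, hz₃, rfl⟩
  · -- prefix of u
    have h1 : A ++ z₂ <+: A ++ (u ++ (v ++ B)) :=
      (List.prefix_append_right_inj A).2 (hz2.trans (List.prefix_append _ _))
    calc wsum (A ++ (v ++ z₂)) ≤ wsum (A ++ z₂) := by
          simp only [wsum_append]; linarith
      _ ≤ _ := le_pmax_of_prefix h1
  · -- prefix of B
    have h1 : A ++ (u ++ (v ++ z₃)) <+: A ++ (u ++ (v ++ B)) :=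
      (List.prefix_append_right_inj A).2 ((List.prefix_append_right_inj u).2 ((List.prefix_append_right_inj v).2 hz₃))
    calc wsum (A ++ (v ++ (u ++ z₃))) = wsum (A ++ (u ++ (v ++ z₃))) := by
          simp only [wsum_append]; ring
      _ ≤ _ := le_pmax_of_prefix h1

/-! ### Structural lemmas about `blocks` -/

lemma blocks_cons (p : GSym × Bool) (w : BWord) :
    blocks (p :: w) = addToBlocks p (blocks w) := rfl

lemma flatten_blocks (w : BWord) : (blocks w).flatten = w := by
  induction w with
  | nil => rfl
  | cons p w ih =>
    rw [blocks_cons]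
    cases h : blocks w with
    | nil => simp [addToBlocks, h] at ih ⊢; simpa using ih
    | cons b bs =>
      rw [h] at ih
      simp only [addToBlocks]
      split <;> simp_all

lemma good_blocks (w : BWord) : ∀ x ∈ blocks w, Good x := by
  induction w with
  | nil => intro x hx; simp [blocks] at hx
  | cons p w ih =>
    intro x hx
    rw [blocks_cons] at hx
    cases h : blocks w with
    | nil => simp [addToBlocks, h] at hx; subst hx; exact ⟨by simp, by simp⟩
    | cons b bs =>
      rw [h, addToBlocks] at hx
      split at hx
      · rcases List.mem_cons.1 hx with rfl | hx
        · rename_i hcond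
          have hb : Good b := ih b (h ▸ List.mem_cons_self)
          refine ⟨by simp, ?_⟩
          intro q hq
          rcases List.mem_cons.1 hq with rfl | hq
          · simp
          · have := hb.2 q hq
            rcases b with _ | ⟨r, b'⟩
            · simp at hq
            · simp only [cOf_cons] at this ⊢
              simp only [List.head?_cons, Option.map_some] at hcond
              rw [this]; exact Option.some.inj hcond
        · exact ih x (h ▸ List.mem_cons_of_mem _ hx)
      · rcases List.mem_cons.1 hx with rfl | hx
        · exact ⟨by simp, by simp⟩
        · exact ih x (h ▸ hx)

lemma chain'_blocks (w : BWord) :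
    List.Chain' (fun x y => cOf x ≠ cOf y) (blocks w) := by
  induction w with
  | nil => simp [blocks, List.Chain']
  | cons p w ih =>
    rw [blocks_cons]
    cases h : blocks w with
    | nil => simp [addToBlocks, List.Chain']
    | cons b bs =>
      rw [h] at ih
      have hb : Good b := good_blocks w b (h ▸ List.mem_cons_self)
      rcases b with _ | ⟨r, b'⟩
      · exact absurd rfl hb.1
      rw [addToBlocks]
      rcases List.isChain_cons.1 ih with ⟨hhd, htl⟩
      split
      · rename_i hcond
        simp only [List.head?_cons, Option.map_some] at hcond
        have hrp : r.2 = p.2 := Option.some.inj hcond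
        refine List.isChain_cons.2 ⟨?_, htl⟩
        intro y hy
        have := hhd y hy
        simpa [cOf, hrp] using this
      · rename_i hcond
        simp only [List.head?_cons, Option.map_some] at hcond
        refine List.isChain_cons.2 ⟨?_, ih⟩
        intro y hy
        rw [Option.mem_def, List.head?_cons, Option.some.injEq] at hy
        subst hy
        simp only [cOf_cons]
        exact fun h' => hcond (by rw [h'])

/-- Prepending a nonempty monochromatic word to a word, at the level of block lists. -/
def mergeHead (x : BWord) (c : Bool) : List BWord → List BWord
  | [] => [x]
  | z :: zs => if cOf z = c then (x ++ z) :: zs else x :: z :: zs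

lemma headColor_eq_cOf (z : BWord) (hz : z ≠ []) :
    z.head?.map Prod.snd = some (cOf z) := by
  rcases z with _ | ⟨q, z'⟩
  · exact absurd rfl hz
  · rfl

lemma blocks_append (x y : BWord) (c : Bool) (hx : x ≠ []) (hc : ∀ p ∈ x, p.2 = c)
    (hy : ∀ z ∈ blocks y, z ≠ []) :
    blocks (x ++ y) = mergeHead x c (blocks y) := by
  induction x with
  | nil => exact absurd rfl hx
  | cons p x' ih =>
    have hpc : p.2 = c := hc p (by simp)
    rcases x' with _ | ⟨q, x''⟩
    · -- x = [p]
      show addToBlocks p (blocks y) = mergeHead [p] c (blocks y)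
      cases h : blocks y with
      | nil => simp [addToBlocks, mergeHead]
      | cons z zs =>
        have hzne : z ≠ [] := hy z (h ▸ List.mem_cons_self)
        simp only [addToBlocks, mergeHead, headColor_eq_cOf z hzne, hpc,
          Option.some.injEq]
        by_cases hzc : cOf z = c <;> simp [hzc]
    · -- x = p :: q :: x''
      have hx' : (q :: x'') ≠ [] := by simp
      have hcx' : ∀ r ∈ q :: x'', r.2 = c := fun r hr => hc r (List.mem_cons_of_mem _ hr)
      have hqc : q.2 = c := hcx' q (by simp)
      have := ih hx' hcx'
      show addToBlocks p (blocks ((q :: x'') ++ y)) = _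
      rw [this]
      cases h : blocks y with
      | nil =>
        simp [mergeHead, addToBlocks, hpc, hqc]
      | cons z zs =>
        have hzne : z ≠ [] := hy z (h ▸ List.mem_cons_self)
        by_cases hzc : cOf z = c
        · simp only [mergeHead, hzc, if_true]
          have : cOf ((q :: x'') ++ z) = c := by simp [hqc]
          simp [addToBlocks, hpc, hqc]
        · simp only [mergeHead, hzc, if_false]
          simp [addToBlocks, hpc, hqc, headColor_eq_cOf z hzne]

lemma blocks_ne_nil_mem (w : BWord) : ∀ z ∈ blocks w, z ≠ [] :=
  fun z hz => (good_blocks w z hz).1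

lemma blocks_flatten_length_le (L : List BWord)
    (hL : ∀ β ∈ L, ∀ p ∈ β, p.2 = cOf β) :
    (blocks L.flatten).length ≤ L.length := by
  induction L with
  | nil => simp [blocks]
  | cons β L' ih =>
    have ih' := ih fun β h => hL β (List.mem_cons_of_mem _ h)
    rcases eq_or_ne β [] with rfl | hβ
    · simpa using Nat.le_succ_of_le ih'
    · rw [List.flatten_cons,
        blocks_append β L'.flatten (cOf β) hβ (hL β (by simp))
          (blocks_ne_nil_mem _)]
      cases h : blocks L'.flatten with
      | nil => simp [mergeHead]
      | cons z zs =>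
        have hlen : (z :: zs).length ≤ L'.length := h ▸ ih'
        simp only [mergeHead]
        simp only [List.length_cons] at hlen
        split
        · simp only [List.length_cons]
          omega
        · simp only [List.length_cons]
          omega

/-- Auxiliary step grouping a list of monochromatic blocks into runs of equal colour. -/
def addToRuns (x : BWord) : List (List BWord) → List (List BWord)
  | [] => [[x]]
  | R :: Rs => if cOf R.flatten = cOf x then (x :: R) :: Rs else [x] :: R :: Rs

/-- Grouping a list of monochromatic blocks into maximal runs of equal colour. -/
def runs (σ : List BWord) : List (List BWord) := σ.foldr addToRuns []

lemma runs_cons (x : BWord) (σ : List BWord) :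
    runs (x :: σ) = addToRuns x (runs σ) := rfl

lemma flatten_runs (σ : List BWord) : (runs σ).flatten = σ := by
  induction σ with
  | nil => rfl
  | cons x σ' ih =>
    rw [runs_cons]
    cases h : runs σ' with
    | nil => rw [h] at ih; simp [addToRuns]; simpa using ih.symm
    | cons R Rs =>
      rw [h] at ih
      rw [addToRuns]
      split <;> simp_all

lemma runs_ne_nil (σ : List BWord) : ∀ R ∈ runs σ, R ≠ [] := by
  induction σ with
  | nil => simp [runs]
  | cons x σ' ih =>
    rw [runs_cons]
    cases h : runs σ' with
    | nil => simp [addToRuns]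
    | cons R Rs =>
      rw [h] at ih
      rw [addToRuns]
      split
      · intro S hS
        rcases List.mem_cons.1 hS with rfl | hS
        · simp
        · exact ih S (List.mem_cons_of_mem _ hS)
      · intro S hS
        rcases List.mem_cons.1 hS with rfl | hS
        · simp
        · exact ih S hS

lemma runs_mem (σ : List BWord) : ∀ R ∈ runs σ, ∀ β ∈ R, β ∈ σ := by
  induction σ with
  | nil => simp [runs]
  | cons x σ' ih =>
    rw [runs_cons]
    cases h : runs σ' with
    | nil =>
      simp only [addToRuns]
      intro R hR β hβ
      simp at hR
      subst hR
      simp at hβ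
      simp [hβ]
    | cons R Rs =>
      rw [h] at ih
      rw [addToRuns]
      split
      · intro S hS β hβ
        rcases List.mem_cons.1 hS with rfl | hS
        · rcases List.mem_cons.1 hβ with rfl | hβ
          · simp
          · exact List.mem_cons_of_mem _ (ih R (by simp) β hβ)
        · exact List.mem_cons_of_mem _ (ih S (List.mem_cons_of_mem _ hS) β hβ)
      · intro S hS β hβ
        rcases List.mem_cons.1 hS with rfl | hS
        · simp at hβ; simp [hβ]
        · exact List.mem_cons_of_mem _ (ih S hS β hβ)

/-- Bridge lemma: the blocks of the concatenation of a list of good blocks are the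
flattenings of its runs. -/
lemma blocks_flatten_eq_runs (σ : List BWord) (hσ : ∀ β ∈ σ, Good β) :
    blocks σ.flatten = (runs σ).map List.flatten := by
  induction σ with
  | nil => rfl
  | cons β σ' ih =>
    have hβ : Good β := hσ β (by simp)
    have ih' := ih fun β h => hσ β (List.mem_cons_of_mem _ h)
    rw [List.flatten_cons,
      blocks_append β σ'.flatten (cOf β) hβ.1 hβ.2 (blocks_ne_nil_mem _), ih',
      runs_cons]
    cases h : runs σ' with
    | nil => simp [mergeHead, addToRuns]
    | cons R Rs =>
      have hR : R ≠ [] := runs_ne_nil σ' R (h ▸ List.mem_cons_self)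
      rcases R with _ | ⟨β₀, R'⟩
      · exact absurd rfl hR
      have hβ₀ : Good β₀ :=
        hσ β₀ (List.mem_cons_of_mem _ (runs_mem σ' _ (h ▸ List.mem_cons_self) β₀ (by simp)))
      rw [addToRuns]
      simp only [List.map_cons, mergeHead, List.flatten_cons]
      split <;> simp

/-! ### The arithmetic counting core -/

lemma length_le_of_all_le_negOne (l : List ℤ) (B : ℤ) (h : ∀ x ∈ l, x ≤ -1)
    (hs : -B ≤ l.sum) : (l.length : ℤ) ≤ B := by
  induction l generalizing B with
  | nil => simpa using hs
  | cons x l ih =>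
    have hx : x ≤ -1 := h x (by simp)
    have := ih (fun y hy => h y (List.mem_cons_of_mem _ hy)) (B := B - 1)
      (by simp only [List.sum_cons] at hs; linarith)
    simp only [List.length_cons]
    push_cast
    linarith

lemma length_le_sum_of_all_ge_one (l : List ℤ) (h : ∀ x ∈ l, 1 ≤ x) :
    (l.length : ℤ) ≤ l.sum := by
  induction l with
  | nil => simp
  | cons x l ih =>
    have := ih fun y hy => h y (List.mem_cons_of_mem _ hy)
    have hx : 1 ≤ x := h x (by simp)
    simp only [List.length_cons, List.sum_cons]
    push_cast
    linarith

lemma chain_prop (l : List (ℤ × Bool)) (y : ℤ × Bool)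
    (hc : List.Chain' (fun x y => 0 ≤ x.1 → 1 ≤ y.1) (y :: l)) (hy : 0 ≤ y.1) :
    ∀ z ∈ l, 1 ≤ z.1 := by
  induction l generalizing y with
  | nil => simp
  | cons z l ih =>
    rcases List.isChain_cons_cons.1 hc with ⟨hyz, hc'⟩
    have hz : 1 ≤ z.1 := hyz hy
    intro u hu
    rcases List.mem_cons.1 hu with rfl | hu
    · exact hz
    · exact ih z hc' (by linarith) u hu

lemma filter_length_split (l : List (ℤ × Bool)) :
    (l.filter (fun x => x.2 == true)).length + (l.filter (fun x => x.2 == false)).length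
      = l.length := by
  induction l with
  | nil => simp
  | cons x l ih =>
    rw [List.filter_cons, List.filter_cons]
    cases hx : x.2
    · rw [if_neg (by decide), if_pos (by decide)]
      simp only [List.length_cons]
      omega
    · rw [if_pos (by decide), if_neg (by decide)]
      simp only [List.length_cons]
      omega

lemma filter_sum_split (l : List (ℤ × Bool)) :
    ((l.filter (fun x => x.2 == true)).map Prod.fst).sum
      + ((l.filter (fun x => x.2 == false)).map Prod.fst).sum = (l.map Prod.fst).sum := by
  induction l with
  | nil => simp
  | cons x l ih =>
    rw [List.filter_cons, List.filter_cons]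
    cases hx : x.2
    · rw [if_neg (by decide), if_pos (by decide)]
      simp only [List.map_cons, List.sum_cons]
      linarith
    · rw [if_pos (by decide), if_neg (by decide)]
      simp only [List.map_cons, List.sum_cons]
      linarith

lemma counting_core (l : List (ℤ × Bool)) (a b : ℤ) (ha : 0 ≤ a)
    (hChain : List.Chain' (fun x y => 0 ≤ x.1 → 1 ≤ y.1) l)
    (hPre : ∀ n : ℕ, ∀ c : Bool,
      -b ≤ (((l.take n).filter (fun x => x.2 == c)).map Prod.fst).sum)
    (hTot : (l.map Prod.fst).sum ≤ a) :
    (l.length : ℤ) ≤ a + 4 * b + 1 := by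
  set p : ℤ × Bool → Bool := fun x => decide (x.1 < 0) with hp
  set l₁ := l.takeWhile p with hl₁
  set l₂ := l.dropWhile p with hl₂
  have hsplit : l₁ ++ l₂ = l := List.takeWhile_append_dropWhile
  have hneg : ∀ x ∈ l₁, x.1 ≤ -1 := by
    intro x hx
    have := List.mem_takeWhile_imp hx
    simp only [hp, decide_eq_true_eq] at this
    omega
  have htake : l₁ = l.take l₁.length := List.prefix_iff_eq_take.1 (List.takeWhile_prefix p)
  have hlen1 : ∀ c : Bool, ((l₁.filter (fun x => x.2 == c)).length : ℤ) ≤ b := by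
    intro c
    have hpre := hPre l₁.length c
    rw [← htake] at hpre
    have := length_le_of_all_le_negOne ((l₁.filter (fun x => x.2 == c)).map Prod.fst) b
      (by
        intro x hx
        rcases List.mem_map.1 hx with ⟨q, hq, rfl⟩
        exact hneg q (List.mem_of_mem_filter hq)) hpre
    simpa using this
  have hlen1' : (l₁.length : ℤ) ≤ 2 * b := by
    have := filter_length_split l₁
    have h1 := hlen1 true
    have h2 := hlen1 false
    push_cast [← this]
    linarith
  have hsum1 : -(2 * b) ≤ (l₁.map Prod.fst).sum := by
    have := filter_sum_split l₁
    have h1 := hPre l₁.length true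
    have h2 := hPre l₁.length false
    rw [← htake] at h1 h2
    linarith
  have hb0 : 0 ≤ b := by
    have := hPre 0 true
    simpa using this
  cases h2 : l₂ with
  | nil =>
    have : l.length = l₁.length := by rw [← hsplit, h2]; simp
    rw [this]
    linarith
  | cons y l₂' =>
    have hy : 0 ≤ y.1 := by
      have := List.head?_dropWhile_not p l
      rw [← hl₂, h2] at this
      simp only [List.head?_cons] at this
      simp only [hp, decide_eq_false_iff_not, not_lt] at this
      exact this
    have hchain2 : List.Chain' (fun x y => 0 ≤ x.1 → 1 ≤ y.1) l₂ := by
      rw [← hsplit] at hChain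
      exact (List.isChain_append.1 hChain).2.1
    have hpos : ∀ z ∈ l₂', 1 ≤ z.1 := chain_prop l₂' y (h2 ▸ hchain2) hy
    have hsum2 : ((l₂'.map Prod.fst).sum : ℤ) ≤ a + 2 * b := by
      have : (l.map Prod.fst).sum
          = (l₁.map Prod.fst).sum + y.1 + (l₂'.map Prod.fst).sum := by
        rw [← hsplit, h2]
        simp
        ring
      linarith
    have hlen2 : ((l₂'.length : ℤ)) ≤ a + 2 * b := by
      have := length_le_sum_of_all_ge_one (l₂'.map Prod.fst)
        (by
          intro x hx
          rcases List.mem_map.1 hx with ⟨q, hq, rfl⟩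
          exact hpos q hq)
      simp only [List.length_map] at this
      linarith
    have hlentot : l.length = l₁.length + 1 + l₂'.length := by
      rw [← hsplit, h2]
      simp
      omega
    rw [hlentot]
    push_cast
    linarith

/-! ### Connection lemmas -/

lemma not_chain'_decomp {α : Type*} (R : α → α → Prop) (L : List α)
    (h : ¬ List.Chain' R L) :
    ∃ L₁ x y L₂, L = L₁ ++ x :: y :: L₂ ∧ ¬ R x y := by
  induction L with
  | nil => exact absurd List.isChain_nil h
  | cons x L ih =>
    cases L with
    | nil => exact absurd (List.isChain_singleton x) h
    | cons y L' =>
      rw [List.Chain', List.isChain_cons_cons] at h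
      by_cases hR : R x y
      · have : ¬ List.Chain' R (y :: L') := fun hc => h ⟨hR, hc⟩
        obtain ⟨L₁, p, q, L₂, hdec, hnR⟩ := ih this
        exact ⟨x :: L₁, p, q, L₂, by rw [List.cons_append, ← hdec], hnR⟩
      · exact ⟨[], x, y, L', rfl, hR⟩

lemma flatten_take_prefix {α : Type*} (L : List (List α)) (n : ℕ) :
    (L.take n).flatten <+: L.flatten := by
  conv_rhs => rw [← List.take_append_drop n L]
  rw [List.flatten_append]
  exact List.prefix_append _ _

lemma good_filter (β : BWord) (hβ : Good β) (c : Bool) :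
    β.filter (fun p => p.2 == c) = if cOf β = c then β else [] := by
  by_cases h : cOf β = c
  · rw [if_pos h]
    apply List.filter_eq_self.2
    intro p hp
    simp [hβ.2 p hp, h]
  · rw [if_neg h]
    apply List.filter_eq_nil_iff.2
    intro p hp
    simp [hβ.2 p hp]
    exact fun hc => h hc

lemma restrict_append (x y : BWord) (c : Bool) :
    restrictColor (x ++ y) c = restrictColor x c ++ restrictColor y c :=
  List.filter_append _ _

lemma restrict_flatten_good (τ : List BWord) (hτ : ∀ β ∈ τ, Good β) (c : Bool) :
    restrictColor τ.flatten c = (τ.filter fun β => cOf β == c).flatten := by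
  induction τ with
  | nil => rfl
  | cons β τ' ih =>
    have hβ : Good β := hτ β (by simp)
    have ih' := ih fun β h => hτ β (List.mem_cons_of_mem _ h)
    rw [List.flatten_cons, restrict_append, List.filter_cons]
    by_cases h : cOf β = c
    · rw [if_pos (by simp [h]), List.flatten_cons, ih']
      have h1 := good_filter β hβ c
      rw [if_pos h] at h1
      rw [show restrictColor β c = List.filter (fun p => p.2 == c) β from rfl, h1]
    · rw [if_neg (by simp [h]), ih']
      have h1 := good_filter β hβ c
      rw [if_neg h] at h1
      rw [show restrictColor β c = List.filter (fun p => p.2 == c) β from rfl, h1,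
        List.nil_append]

lemma restrict_prefix {u x : BWord} (h : u <+: x) (c : Bool) :
    restrictColor u c <+: restrictColor x c := List.IsPrefix.filter _ h

lemma swap_filter_eq (A u v B : BWord) (hu : Good u) (hv : Good v)
    (huv : cOf u ≠ cOf v) (c : Bool) :
    restrictColor (A ++ (v ++ (u ++ B))) c = restrictColor (A ++ (u ++ (v ++ B))) c := by
  simp only [restrictColor, List.filter_append]
  rcases eq_or_ne (cOf u) c with h | h
  · have hv0 : List.filter (fun p => p.2 == c) v = [] := by
      have := good_filter v hv c
      rw [if_neg (by rw [← h]; exact fun hc => huv hc.symm)] at this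
      exact this
    rw [hv0]
    simp
  · have hu0 : List.filter (fun p => p.2 == c) u = [] := by
      have := good_filter u hu c
      rw [if_neg h] at this
      exact this
    rw [hu0]
    simp

/-- **Dealternation Lemma for bichromatic words** (Bojańczyk–Pilipczuk, Lemma 7.1).
If `pmax w ≤ a` and each colour restriction `u` of `w` has `pmin u ≥ -b`, then some block
shuffle `w'` of `w` has `pmax w' ≤ pmax w` and at most `a + 4b + 2` maximal monochromatic
blocks. -/
theorem dealternation_of_words (w : BWord) (a b : ℕ)
    (ha : pmax w ≤ (a : ℤ))
    (hb : ∀ c : Bool, -(b : ℤ) ≤ pmin (restrictColor w c)) :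
    ∃ w' : BWord, IsBlockShuffle w w' ∧ pmax w' ≤ pmax w ∧
      (blocks w').length ≤ a + 4 * b + 2 := by
  classical
  set S : Set ℕ := {n | ∃ σ : List BWord, σ.Perm (blocks w) ∧
      (∀ c : Bool, restrictColor σ.flatten c = restrictColor w c) ∧
      pmax σ.flatten ≤ pmax w ∧ (blocks σ.flatten).length = n} with hS
  have hSne : S.Nonempty := by
    refine ⟨(blocks w).length, blocks w, List.Perm.refl _, ?_, ?_, ?_⟩ <;>
      rw [flatten_blocks]
    exact fun _ => rfl
  obtain ⟨σ, hPerm, hRes, hPmax, hCount⟩ := Nat.sInf_mem hSne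
  refine ⟨σ.flatten, ⟨σ, hPerm, rfl, hRes⟩, hPmax, ?_⟩
  by_contra hcon
  push_neg at hcon
  set w' := σ.flatten with hw'
  set τ := blocks w' with hτ
  have hGoodτ : ∀ β ∈ τ, Good β := good_blocks w'
  have hGoodσ : ∀ β ∈ σ, Good β := fun β h => good_blocks w β (hPerm.mem_iff.1 h)
  have hN3 : 3 ≤ τ.length := by omega
  -- Step 1: no adjacent pair (nonnegative, nonpositive) of block sums
  have hChainτ : List.Chain' (fun x y => 0 ≤ wsum x → 1 ≤ wsum y) τ := by
    by_contra hnc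
    obtain ⟨τ₁, u, v, τ₂, hdec, hbad⟩ := not_chain'_decomp _ _ hnc
    push_neg at hbad
    obtain ⟨hu, hv⟩ := hbad
    have hv' : wsum v ≤ 0 := by omega
    -- colours of the relevant blocks
    have hchainC := chain'_blocks w'
    rw [← hτ, hdec] at hchainC
    obtain ⟨hC1, hC2, hC12⟩ := List.isChain_append.1 hchainC
    have huv : cOf u ≠ cOf v := (List.isChain_cons_cons.1 hC2).1
    have hGoodu : Good u := hGoodτ u (by rw [hdec]; simp)
    have hGoodv : Good v := hGoodτ v (by rw [hdec]; simp)
    -- decompose the runs of σ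
    have hbridge : (runs σ).map List.flatten = τ₁ ++ u :: v :: τ₂ := by
      rw [← hdec, hτ, hw']
      exact (blocks_flatten_eq_runs σ hGoodσ).symm
    obtain ⟨R₁, Rr, hRdec, hR₁, hRr⟩ := List.map_eq_append_iff.1 hbridge
    obtain ⟨U, Rr2, hRr2, hU, hRr2m⟩ := List.map_eq_cons_iff.1 hRr
    obtain ⟨V, R₂, hRr3, hV, hR₂⟩ := List.map_eq_cons_iff.1 hRr2m
    -- the swapped permutation σ'
    have hσdec : σ = R₁.flatten ++ (U ++ (V ++ R₂.flatten)) := by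
      conv_lhs => rw [← flatten_runs σ]
      rw [hRdec, hRr2, hRr3]
      simp
    set σ' := R₁.flatten ++ (V ++ (U ++ R₂.flatten)) with hσ'
    have hPerm' : σ'.Perm σ := by
      rw [hσdec, hσ']
      exact List.Perm.append_left _ (List.perm_append_comm_assoc V U R₂.flatten)
    have hfl1 : (R₁.flatten : List BWord).flatten = τ₁.flatten := by
      rw [List.flatten_flatten, hR₁]
    have hfl2 : (R₂.flatten : List BWord).flatten = τ₂.flatten := by
      rw [List.flatten_flatten, hR₂]
    have hflσ' : σ'.flatten = τ₁.flatten ++ (v ++ (u ++ τ₂.flatten)) := by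
      rw [hσ', List.flatten_append, List.flatten_append, List.flatten_append,
        hfl1, hfl2, hU, hV]
    have hflσ : w' = τ₁.flatten ++ (u ++ (v ++ τ₂.flatten)) := by
      conv_lhs => rw [← flatten_blocks w', ← hτ, hdec]
      simp
    -- validity of σ'
    have hRes' : ∀ c, restrictColor σ'.flatten c = restrictColor w c := by
      intro c
      rw [hflσ', swap_filter_eq _ _ _ _ hGoodu hGoodv huv c, ← hflσ]
      exact hRes c
    have hPmax' : pmax σ'.flatten ≤ pmax w := by
      rw [hflσ']
      calc pmax (τ₁.flatten ++ (v ++ (u ++ τ₂.flatten)))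
          ≤ pmax (τ₁.flatten ++ (u ++ (v ++ τ₂.flatten))) := pmax_swap _ _ _ _ hu hv'
        _ = pmax w' := by rw [← hflσ]
        _ ≤ pmax w := hPmax
    -- the swap strictly decreases the number of blocks
    have hcount' : (blocks σ'.flatten).length + 1 ≤ τ.length := by
      cases hτ₂ : τ₂ with
      | cons z τ₂' =>
        have hGoodz : Good z := hGoodτ z (by rw [hdec, hτ₂]; simp)
        have hvz : cOf v ≠ cOf z := by
          have h2 := (List.isChain_cons_cons.1 hC2).2
          rw [hτ₂] at h2
          exact (List.isChain_cons_cons.1 h2).1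
        have huz : cOf u = cOf z := by
          revert huv hvz
          cases (cOf u) <;> cases (cOf v) <;> cases (cOf z) <;> simp
        have hmono : ∀ β ∈ τ₁ ++ v :: (u ++ z) :: τ₂', ∀ p ∈ β, p.2 = cOf β := by
          intro β hβ
          rcases List.mem_append.1 hβ with hβ | hβ
          · exact (hGoodτ β (by rw [hdec]; exact List.mem_append.2 (Or.inl hβ))).2
          · rcases List.mem_cons.1 hβ with rfl | hβ
            · exact hGoodv.2
            rcases List.mem_cons.1 hβ with rfl | hβ
            · intro p hp
              rw [cOf_append_left u z hGoodu.1]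
              rcases List.mem_append.1 hp with hp | hp
              · exact hGoodu.2 p hp
              · rw [hGoodz.2 p hp, ← huz]
            · exact (hGoodτ β (by rw [hdec, hτ₂]; simp [hβ])).2
        have hle := blocks_flatten_length_le _ hmono
        have hfl : (τ₁ ++ v :: (u ++ z) :: τ₂').flatten = σ'.flatten := by
          rw [hflσ', hτ₂]
          simp
        rw [hfl] at hle
        have hlenτ : τ.length = τ₁.length + τ₂'.length + 3 := by
          rw [hdec, hτ₂]; simp; omega
        simp only [List.length_append, List.length_cons] at hle
        omega
      | nil =>
        have hτ₁ne : τ₁ ≠ [] := by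
          intro h0
          rw [hdec, hτ₂, h0] at hN3
          simp at hN3
        obtain ⟨η, z, hη⟩ : ∃ η z, τ₁ = η ++ [z] :=
          ⟨τ₁.dropLast, τ₁.getLast hτ₁ne, (List.dropLast_append_getLast hτ₁ne).symm⟩
        have hGoodz : Good z := hGoodτ z (by rw [hdec, hη]; simp)
        have hzu : cOf z ≠ cOf u := by
          refine hC12 z ?_ u ?_
          · rw [hη]
            simp [List.getLast?_append]
          · simp
        have hzv : cOf z = cOf v := by
          revert huv hzu
          cases (cOf u) <;> cases (cOf v) <;> cases (cOf z) <;> simp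
        have hmono : ∀ β ∈ η ++ (z ++ v) :: [u], ∀ p ∈ β, p.2 = cOf β := by
          intro β hβ
          rcases List.mem_append.1 hβ with hβ | hβ
          · exact (hGoodτ β (by rw [hdec, hη]; simp [hβ])).2
          · rcases List.mem_cons.1 hβ with rfl | hβ
            · intro p hp
              rw [cOf_append_left z v hGoodz.1]
              rcases List.mem_append.1 hp with hp | hp
              · exact hGoodz.2 p hp
              · rw [hGoodv.2 p hp, hzv]
            · rcases List.mem_cons.1 hβ with rfl | hβ
              · exact hGoodu.2
              · simp at hβ
        have hle := blocks_flatten_length_le _ hmono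
        have hfl : (η ++ (z ++ v) :: [u]).flatten = σ'.flatten := by
          rw [hflσ', hη, hτ₂]
          simp
        rw [hfl] at hle
        have hlenτ : τ.length = η.length + 3 := by
          rw [hdec, hτ₂, hη]; simp
        simp only [List.length_append, List.length_cons, List.length_nil] at hle
        omega
    -- contradiction with minimality
    have hmem : (blocks σ'.flatten).length ∈ S := ⟨σ', hPerm'.trans hPerm, hRes', hPmax', rfl⟩
    have hge := Nat.sInf_le hmem
    omega
  -- Step 2: the counting argument
  set f : BWord → ℤ × Bool := fun β => (wsum β, cOf β) with hf
  have hChainl : List.Chain' (fun x y : ℤ × Bool => 0 ≤ x.1 → 1 ≤ y.1) (τ.map f) :=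
    (List.isChain_map f).2 hChainτ
  have hPre : ∀ (n : ℕ) (c : Bool),
      -(b : ℤ) ≤ ((((τ.map f).take n).filter (fun x => x.2 == c)).map Prod.fst).sum := by
    intro n c
    rw [← List.map_take, List.filter_map, List.map_map]
    have hc : ((fun x : ℤ × Bool => x.2 == c) ∘ f) = fun β => cOf β == c := rfl
    have hm : (Prod.fst ∘ f) = wsum := rfl
    rw [hc, hm]
    have hgood : ∀ β ∈ τ.take n, Good β := fun β h => hGoodτ β (List.mem_of_mem_take h)
    rw [show ((τ.take n).filter fun β => cOf β == c).map wsum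
        = ((τ.take n).filter fun β => cOf β == c).map wsum from rfl]
    rw [← wsum_flatten, ← restrict_flatten_good _ hgood c]
    have hpref : restrictColor (τ.take n).flatten c <+: restrictColor w' c := by
      have h3 : (τ.take n).flatten <+: τ.flatten := flatten_take_prefix τ n
      rw [show τ.flatten = w' from by rw [hτ]; exact flatten_blocks w'] at h3
      exact restrict_prefix h3 c
    have h1 : pmin (restrictColor w' c) ≤ wsum (restrictColor (τ.take n).flatten c) :=
      pmin_le_of_prefix hpref
    have h2 := hb c
    rw [← hRes c] at h2
    linarith
  have hTot : ((τ.map f).map Prod.fst).sum ≤ (a : ℤ) := by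
    rw [List.map_map]
    have hm : (Prod.fst ∘ f) = wsum := rfl
    rw [hm, ← wsum_flatten,
      show τ.flatten = w' from by rw [hτ]; exact flatten_blocks w']
    calc wsum w' ≤ pmax w' := wsum_le_pmax w'
      _ ≤ pmax w := hPmax
      _ ≤ (a : ℤ) := ha
  have hcore := counting_core (τ.map f) a b (le_trans (pmax_nonneg w) ha) hChainl hPre hTot
  rw [List.length_map] at hcore
  omega

end BichromaticWord
end

section
/- Let f : 2^V → ℕ be a symmetric submodular function on subsets of a finite set V, let C ⊆ L ⊆ V, and let S with C ⊆ S ⊆ L minimize f(S) among all such sets. Then for every D ⊆ L disjoint from C it holds that f(D ∖ S) ≤ f(D) (equivalently, by symmetry, f((V∖D) ∪ S) ≤ f(V∖D)). -/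
/-- Let `f` be a symmetric submodular function on subsets of a finite set `V`, let
`C ⊆ L ⊆ V`, and let `S` with `C ⊆ S ⊆ L` minimize `f` among all sets `X` with
`C ⊆ X ⊆ L`. Then for every `D ⊆ L` disjoint from `C` one has `f(D \ S) ≤ f(D)`. -/
theorem diff_min_of_symm_submodular {V : Type*} [Finite V] (f : Set V → ℕ)
    (hsym : ∀ A : Set V, f A = f Aᶜ)
    (hsub : ∀ A B : Set V, f (A ∪ B) + f (A ∩ B) ≤ f A + f B)
    (C L S : Set V) (hCS : C ⊆ S) (hSL : S ⊆ L)
    (hmin : ∀ X : Set V, C ⊆ X → X ⊆ L → f S ≤ f X)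
    (D : Set V) (hDL : D ⊆ L) (hDC : Disjoint D C) :
    f (D \ S) ≤ f D := by
  have hC : C ⊆ Dᶜ ∩ S := by
    intro x hx
    exact ⟨fun hxD => hDC.ne_of_mem hxD hx rfl, hCS hx⟩
  have hL : Dᶜ ∩ S ⊆ L := fun x hx => hSL hx.2
  have h1 : f S ≤ f (Dᶜ ∩ S) := hmin _ hC hL
  have h2 := hsub Dᶜ S
  have h3 : f (Dᶜ ∪ S) ≤ f Dᶜ := by omega
  have heq : (D \ S) = (Dᶜ ∪ S)ᶜ := by
    ext x; simp [Set.mem_diff, not_or]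
  calc f (D \ S) = f (Dᶜ ∪ S) := by rw [heq, ← hsym]
    _ ≤ f Dᶜ := h3
    _ = f D := (hsym D).symm
end
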